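/- Let S be a finite set of segments in the plane with congestion c, meaning for every point p and radius ρ > 0 the total length of the parts of segments of S inside q(p,ρ) is at most c·ρ. If every segment in a subset T ⊆ S has length at least αr and intersects the square q(p,r), then |T| ≤ ((1+α)/α)·c. -/

import Mathlib

/-! A segment of `T` meeting `q(p, r)` at `x` has a subsegment of length `αr` through `x`; it lies
in the ball of radius `αr` around `x`, hence in the enlarged square `q(p, (1+α)r)`. Summing,
`|T| · αr ≤ c · (1+α)r` by the congestion bound at that square. -/

open Real MeasureTheory

/-- The axis-parallel square (`L∞`-ball) centered at `p` of radius `ρ` (side length `2ρ`). -/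
def square (p : EuclideanSpace ℝ (Fin 2)) (ρ : ℝ) : Set (EuclideanSpace ℝ (Fin 2)) :=
  {x | ∀ i, |x i - p i| ≤ ρ}

open Metric Set AffineMap

section Segment

variable {E : Type*} [NormedAddCommGroup E] [NormedSpace ℝ E]

theorem exists_subsegment_of_mem_segment {a b x : E} (hx : x ∈ segment ℝ a b) {ℓ : ℝ}
    (hℓ₀ : 0 ≤ ℓ) (hℓ : ℓ ≤ dist a b) :
    ∃ y z, segment ℝ y z ⊆ segment ℝ a b ∧ x ∈ segment ℝ y z ∧ dist y z = ℓ := by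
  rw [segment_eq_image_lineMap] at hx ⊢
  obtain ⟨t, ⟨ht₀, ht₁⟩, rfl⟩ := hx
  -- if `a = b` then `ℓ = 0`, and `ℓ / 0 = 0` still gives a valid `δ`
  set δ := ℓ / dist a b
  have hδ₀ : 0 ≤ δ := div_nonneg hℓ₀ dist_nonneg
  have hδ₁ : δ ≤ 1 := div_le_one_of_le₀ hℓ dist_nonneg
  set s := min t (1 - δ)
  have hs_le : s ≤ t := min_le_left _ _
  have hs_le' : s ≤ 1 - δ := min_le_right _ _
  have ht_le : t ≤ s + δ := by
    rcases le_total t (1 - δ) with h | h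
    · simp only [s, min_eq_left h]; linarith
    · simp only [s, min_eq_right h]; linarith
  have himage : segment ℝ (lineMap a b s) (lineMap a b (s + δ)) =
      lineMap a b '' Icc s (s + δ) := by
    rw [← image_segment ℝ (lineMap a b), segment_eq_Icc (by linarith)]
  refine ⟨lineMap a b s, lineMap a b (s + δ), ?_, ?_, ?_⟩
  · rw [himage]
    exact image_mono (Icc_subset_Icc (le_min ht₀ (by linarith)) (by linarith))
  · rw [himage]
    exact mem_image_of_mem _ ⟨hs_le, ht_le⟩
  · rw [dist_lineMap_lineMap, Real.dist_eq, show s - (s + δ) = -δ by ring, abs_neg,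
      abs_of_nonneg hδ₀]
    exact div_mul_cancel_of_imp fun h => le_antisymm (h ▸ hℓ) hℓ₀

theorem ofReal_le_hausdorffMeasure_segment_inter_closedBall [MeasurableSpace E] [BorelSpace E]
    {a b x : E} (hx : x ∈ segment ℝ a b) {ℓ : ℝ} (hℓ : ℓ ≤ dist a b) :
    ENNReal.ofReal ℓ ≤ μH[1] (segment ℝ a b ∩ closedBall x ℓ) := by
  rcases lt_or_ge ℓ 0 with hneg | hℓ₀
  · simp [ENNReal.ofReal_of_nonpos hneg.le]
  obtain ⟨y, z, hsub, hxyz, hyz⟩ := exists_subsegment_of_mem_segment hx hℓ₀ hℓ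
  have hy : y ∈ closedBall x ℓ := by
    rw [mem_closedBall_comm, ← hyz]; exact segment_subset_closedBall_left y z hxyz
  have hz : z ∈ closedBall x ℓ := by
    rw [mem_closedBall_comm, ← hyz]; exact segment_subset_closedBall_right y z hxyz
  calc ENNReal.ofReal ℓ = μH[1] (segment ℝ y z) := by
        rw [hausdorffMeasure_segment, edist_dist, hyz]
    _ ≤ μH[1] (segment ℝ a b ∩ closedBall x ℓ) :=
        measure_mono (subset_inter hsub ((convex_closedBall x ℓ).segment_subset hy hz))

end Segment

theorem closedBall_subset_square {p x : EuclideanSpace ℝ (Fin 2)} {r : ℝ} (hx : x ∈ square p r)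
    (ε : ℝ) : closedBall x ε ⊆ square p (r + ε) := fun y hy i =>
  calc |y i - p i| ≤ |y i - x i| + |x i - p i| := abs_sub_le _ _ _
    _ ≤ ε + r := add_le_add ((PiLp.dist_apply_le y x i).trans hy) (hx i)
    _ = r + ε := add_comm _ _

/-- If `S` has congestion at most `c` (for every center and radius `ρ > 0`, the total
length of `S` clipped to the square is at most `c·ρ`), and every segment of `T ⊆ S`
has length at least `α·r` and intersects `q(p,r)`, then `|T| ≤ ((1+α)/α)·c`. -/
theorem stmt_5 (S T : Finset (EuclideanSpace ℝ (Fin 2) × EuclideanSpace ℝ (Fin 2)))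
    (c : ℝ)
    (hc : ∀ (p' : EuclideanSpace ℝ (Fin 2)) (ρ : ℝ), 0 < ρ →
      ∑ s ∈ S, (μH[1] (segment ℝ s.1 s.2 ∩ square p' ρ)).toReal ≤ c * ρ)
    (p : EuclideanSpace ℝ (Fin 2)) (r α : ℝ) (hr : 0 < r) (hα : 0 < α)
    (hTS : T ⊆ S)
    (hlong : ∀ s ∈ T, α * r ≤ dist s.1 s.2)
    (hmeet : ∀ s ∈ T, (segment ℝ s.1 s.2 ∩ square p r).Nonempty) :
    (T.card : ℝ) ≤ (1 + α) / α * c := by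
  set len := fun s : EuclideanSpace ℝ (Fin 2) × EuclideanSpace ℝ (Fin 2) =>
    (μH[1] (segment ℝ s.1 s.2 ∩ square p (r + α * r))).toReal
  have hpiece : ∀ s ∈ T, α * r ≤ len s := fun s hs => by
    obtain ⟨x, hxs, hxq⟩ := hmeet s hs
    refine (ENNReal.ofReal_le_iff_le_toReal ?_).1 <|
      (ofReal_le_hausdorffMeasure_segment_inter_closedBall hxs (hlong s hs)).trans <|
        measure_mono (inter_subset_inter_right _ (closedBall_subset_square hxq _))
    exact ne_top_of_le_ne_top (by simp [edist_ne_top]) (measure_mono inter_subset_left)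
  have hcount : T.card * (α * r) ≤ c * (r + α * r) :=
    calc T.card * (α * r) ≤ ∑ s ∈ T, len s := by
          simpa using T.card_nsmul_le_sum len _ hpiece
      _ ≤ ∑ s ∈ S, len s :=
          Finset.sum_le_sum_of_subset_of_nonneg hTS fun _ _ _ => ENNReal.toReal_nonneg
      _ ≤ c * (r + α * r) := hc p _ (by positivity)
  rw [div_mul_eq_mul_div, le_div_iff₀ hα]
  nlinarith
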